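/- Let E be a real normed space, K ⊆ E a nontrivial cone with norm-base B_K, and A ⊆ E a nontrivial cone with norm-base B_A. For (x*, α) ∈ E* × ℝ with α ≥ 0, the following are equivalent: (1) (x*, α) ∈ K^{aw#} and x*(a) + α‖a‖ > 0 for all a ∈ A \ {0} and x*(k) + α‖k‖ < 0 for all k ∈ (−K) \ {0}; (2) x*(a) > −α for all a ∈ B_A and −α > x*(k) for all k ∈ −cl_w B_K (the negation of the weak closure of B_K). -/

import Mathlib

open Set

variable {E : Type*} [NormedAddCommGroup E] [NormedSpace ℝ E]

/-- `K` is a cone: contains `0` and is closed under nonnegative scalar multiplication. -/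
def IsCone (K : Set E) : Prop :=
  (0 : E) ∈ K ∧ ∀ t : ℝ, 0 ≤ t → ∀ x ∈ K, t • x ∈ K

/-- A cone is nontrivial if it is neither `{0}` nor the whole space. -/
def IsNontrivialCone (K : Set E) : Prop :=
  IsCone K ∧ K ≠ {0} ∧ K ≠ Set.univ

/-- The norm-base of a cone: its intersection with the unit sphere. -/
def normBase (K : Set E) : Set E := {x ∈ K | ‖x‖ = 1}

/-- Closure of a set with respect to the weak topology `σ(E, E*)`. -/
noncomputable def wClosure (S : Set E) : Set E :=
  (toWeakSpace ℝ E).symm '' closure ((toWeakSpace ℝ E) '' S)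

/-- A set is weakly compact if it is compact in the weak topology `σ(E, E*)`. -/
def WeaklyCompact (S : Set E) : Prop :=
  IsCompact ((toWeakSpace ℝ E) '' S)

/-- A set is weakly closed if it equals its weak closure. -/
noncomputable def WeaklyClosed (S : Set E) : Prop :=
  wClosure S = S

/-- The (topological) dual cone `K⁺`. -/
def dualCone (K : Set E) : Set (E →L[ℝ] ℝ) :=
  {f | ∀ k ∈ K, 0 ≤ f k}

/-- The set `K^#` of functionals strictly positive on `K \ {0}`. -/
def sharpCone (K : Set E) : Set (E →L[ℝ] ℝ) :=
  {f | ∀ k ∈ K, k ≠ 0 → 0 < f k}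

/-- The set `K^{w#}` of functionals strictly positive on the weak closure of the norm-base. -/
noncomputable def wSharpCone (K : Set E) : Set (E →L[ℝ] ℝ) :=
  {f | ∀ x ∈ wClosure (normBase K), 0 < f x}

/-- The algebraic interior (core) of a set in a real vector space. -/
def core {X : Type*} [AddCommGroup X] [Module ℝ X] (Ω : Set X) : Set X :=
  {x ∈ Ω | ∀ v : X, ∃ ε > 0, ∀ t ∈ Set.Icc (0 : ℝ) ε, x + t • v ∈ Ω}

/-- The augmented dual cone `K^{a+}`. -/
def augDualCone (K : Set E) : Set ((E →L[ℝ] ℝ) × ℝ) :=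
  {p | 0 ≤ p.2 ∧ ∀ y ∈ K, 0 ≤ p.1 y - p.2 * ‖y‖}

/-- The set `K^{a#}`. -/
def augSharpCone (K : Set E) : Set ((E →L[ℝ] ℝ) × ℝ) :=
  {p | 0 ≤ p.2 ∧ p.1 ∈ sharpCone K ∧ ∀ y ∈ K, y ≠ 0 → 0 < p.1 y - p.2 * ‖y‖}

/-- The set `K^{aw#}`. -/
noncomputable def augWSharpCone (K : Set E) : Set ((E →L[ℝ] ℝ) × ℝ) :=
  {p | 0 ≤ p.2 ∧ p.1 ∈ sharpCone K ∧ ∀ y ∈ wClosure (normBase K), p.2 < p.1 y}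

/-- `S_C = conv(B_C)`. -/
noncomputable def convBase (C : Set E) : Set E := convexHull ℝ (normBase C)

/-- `S_C^0 = conv({0} ∪ B_C)`. -/
noncomputable def convBase0 (C : Set E) : Set E := convexHull ℝ ({0} ∪ normBase C)

/-!
Everything is positively homogeneous along rays of a cone: the conditions on `A \ {0}` and on
`(-K) \ {0}` are the conditions on the norm-bases `B_A` and `B_K` after scaling by `‖a‖⁻¹`.
The condition on `B_K` follows from the one on its weak closure, and since `α ≥ 0` it also gives
`f ∈ K^#`.
-/

theorem subset_wClosure (S : Set E) : S ⊆ wClosure S := fun x hx =>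
  ⟨toWeakSpace ℝ E x, subset_closure ⟨x, hx, rfl⟩, (toWeakSpace ℝ E).symm_apply_apply x⟩

theorem IsCone.inv_norm_smul_mem_normBase {C : Set E} (hC : IsCone C) {x : E} (hx : x ∈ C)
    (hx0 : x ≠ 0) : ‖x‖⁻¹ • x ∈ normBase C :=
  ⟨hC.2 _ (inv_nonneg.2 (norm_nonneg x)) x hx, norm_smul_inv_norm hx0⟩

theorem IsCone.forall_normBase_lt_iff {C : Set E} (hC : IsCone C) (f : E →L[ℝ] ℝ) (β : ℝ) :
    (∀ x ∈ normBase C, β < f x) ↔ ∀ x ∈ C, x ≠ 0 → β * ‖x‖ < f x := by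
  constructor
  · intro h x hx hx0
    have hn : 0 < ‖x‖ := norm_pos_iff.2 hx0
    have := h _ (hC.inv_norm_smul_mem_normBase hx hx0)
    rwa [map_smul, smul_eq_mul, inv_mul_eq_div, lt_div_iff₀ hn] at this
  · rintro h x ⟨hx, hx1⟩
    have hx0 : x ≠ 0 := by rintro rfl; simp at hx1
    simpa [hx1] using h x hx hx0

theorem forall_mem_neg_lt_neg_iff (S : Set E) (f : E →L[ℝ] ℝ) (β : ℝ) :
    (∀ x ∈ -S, f x < -β) ↔ ∀ y ∈ S, β < f y := by
  refine ⟨fun h y hy => ?_, fun h x hx => ?_⟩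
  · simpa using h (-y) (by simpa using hy)
  · simpa using neg_lt_neg (h (-x) hx)

theorem IsCone.forall_add_mul_norm_pos_iff {C : Set E} (hC : IsCone C) (f : E →L[ℝ] ℝ)
    (β : ℝ) : (∀ x ∈ C, x ≠ 0 → 0 < f x + β * ‖x‖) ↔ ∀ x ∈ normBase C, -β < f x := by
  rw [hC.forall_normBase_lt_iff]
  refine forall₃_congr fun x _ _ => ?_
  constructor <;> intro h <;> linarith

theorem IsCone.forall_neg_add_mul_norm_neg_iff {C : Set E} (hC : IsCone C) (f : E →L[ℝ] ℝ)
    (β : ℝ) : (∀ x ∈ -C, x ≠ 0 → f x + β * ‖x‖ < 0) ↔ ∀ x ∈ normBase C, β < f x := by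
  rw [hC.forall_normBase_lt_iff]
  refine ⟨fun h x hx hx0 => ?_, fun h x hx hx0 => ?_⟩
  · have := h (-x) (by simpa using hx) (neg_ne_zero.2 hx0)
    rw [map_neg, norm_neg] at this
    linarith
  · have := h (-x) hx (neg_ne_zero.2 hx0)
    rw [map_neg, norm_neg] at this
    linarith

theorem stmt13 (K A : Set E) (hK : IsNontrivialCone K) (hA : IsNontrivialCone A)
    (f : E →L[ℝ] ℝ) (α : ℝ) (hα : 0 ≤ α) :
    ((f, α) ∈ augWSharpCone K ∧
      (∀ a ∈ A, a ≠ 0 → 0 < f a + α * ‖a‖) ∧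
      (∀ k ∈ (-K : Set E), k ≠ 0 → f k + α * ‖k‖ < 0)) ↔
    ((∀ a ∈ normBase A, -α < f a) ∧
      (∀ k ∈ -(wClosure (normBase K)), f k < -α)) := by
  rw [hA.1.forall_add_mul_norm_pos_iff, hK.1.forall_neg_add_mul_norm_neg_iff,
    forall_mem_neg_lt_neg_iff]
  refine ⟨fun ⟨⟨_, _, hw⟩, hAb, _⟩ => ⟨hAb, hw⟩, fun ⟨hAb, hw⟩ => ?_⟩
  have hKb : ∀ k ∈ normBase K, α < f k := fun k hk => hw k (subset_wClosure _ hk)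
  have hsharp : f ∈ sharpCone K := fun k hk hk0 =>
    (mul_nonneg hα (norm_nonneg k)).trans_lt ((hK.1.forall_normBase_lt_iff f α).1 hKb k hk hk0)
  exact ⟨⟨hα, hsharp, hw⟩, hAb, hKb⟩
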